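/- Let F be a finite field, let d be an even positive integer, and let n = n1 + n2, k = a1 + a2 with a_i ≥ d/2 and a_i ≤ t_i ≤ n_i − a_i for i = 1,2. Let B ⊆ F^n be the row space of a k × n block matrix (row blocks a1, a2; column blocks t1, n1−t1, t2, n2−t2) of the form ( G_{B,1}, M_{1,1}, 0, M_{1,2} ; 0, M_{2,1}, G_{B,2}, M_{2,2} ) where G_{B,i} is an a_i × t_i matrix of rank a_i, and let E ⊆ F^n be the row space of a k × n block matrix of the form ( M_1, G_1, 0, 0 ; 0, 0, M_2, G_2 ) (same block sizes) where G_i is an a_i × (n_i − t_i) matrix of rank a_i and rank(M_i) ≤ c_i for i = 1,2. If c1 + c2 ≤ k − d/2, then dim(B ∩ E) ≤ c1 + c2 ≤ k − d/2, so dis(B, E) ≥ d. Moreover, with S1 the subspace of F^n of vectors whose first n1 coordinates are zero and S2 the subspace of vectors whose last n2 coordinates are zero, dim(E ∩ S1) = a2 ≥ d/2 and dim(E ∩ S2) = a1 ≥ d/2. -/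

import Mathlib

open Matrix

/-- The row space of a matrix: the span of its rows, i.e. the range of `vecMul`. -/
noncomputable def rowSpace {F : Type*} [Field F] {m n : Type*} [Fintype m]
    (A : Matrix m n F) : Submodule F (n → F) :=
  LinearMap.range A.vecMulLinear

/-- The generator matrix `( G1, M11, 0, M12 ; 0, M21, G2, M22 )` with row blocks of
sizes `a1, a2` and column blocks of sizes `t1, p1, t2, p2`. -/
def genB {F : Type*} [Field F] {a1 a2 t1 t2 p1 p2 : ℕ}
    (G1 : Matrix (Fin a1) (Fin t1) F) (M11 : Matrix (Fin a1) (Fin p1) F)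
    (M12 : Matrix (Fin a1) (Fin p2) F) (M21 : Matrix (Fin a2) (Fin p1) F)
    (G2 : Matrix (Fin a2) (Fin t2) F) (M22 : Matrix (Fin a2) (Fin p2) F) :
    Matrix (Fin a1 ⊕ Fin a2) ((Fin t1 ⊕ Fin p1) ⊕ (Fin t2 ⊕ Fin p2)) F :=
  Matrix.fromBlocks (Matrix.fromCols G1 M11) (Matrix.fromCols 0 M12)
    (Matrix.fromCols 0 M21) (Matrix.fromCols G2 M22)

/-- The generator matrix `( M1, G1, 0, 0 ; 0, 0, M2, G2 )` with row blocks of sizes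
`a1, a2` and column blocks of sizes `t1, p1, t2, p2`. -/
def genE {F : Type*} [Field F] {a1 a2 t1 t2 p1 p2 : ℕ}
    (M1 : Matrix (Fin a1) (Fin t1) F) (G1 : Matrix (Fin a1) (Fin p1) F)
    (M2 : Matrix (Fin a2) (Fin t2) F) (G2 : Matrix (Fin a2) (Fin p2) F) :
    Matrix (Fin a1 ⊕ Fin a2) ((Fin t1 ⊕ Fin p1) ⊕ (Fin t2 ⊕ Fin p2)) F :=
  Matrix.fromBlocks (Matrix.fromCols M1 G1) 0 0 (Matrix.fromCols M2 G2)

/-- `S1`: the subspace of vectors whose first `n1 = t1 + p1` coordinates are zero. -/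
noncomputable def S1 (F : Type*) [Field F] (t1 p1 t2 p2 : ℕ) :
    Submodule F ((Fin t1 ⊕ Fin p1) ⊕ (Fin t2 ⊕ Fin p2) → F) :=
  LinearMap.ker (LinearMap.funLeft F F
    (Sum.inl : Fin t1 ⊕ Fin p1 → (Fin t1 ⊕ Fin p1) ⊕ (Fin t2 ⊕ Fin p2)))

/-- `S2`: the subspace of vectors whose last `n2 = t2 + p2` coordinates are zero. -/
noncomputable def S2 (F : Type*) [Field F] (t1 p1 t2 p2 : ℕ) :
    Submodule F ((Fin t1 ⊕ Fin p1) ⊕ (Fin t2 ⊕ Fin p2) → F) :=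
  LinearMap.ker (LinearMap.funLeft F F
    (Sum.inr : Fin t2 ⊕ Fin p2 → (Fin t1 ⊕ Fin p1) ⊕ (Fin t2 ⊕ Fin p2)))

/-!
Restricting vectors to the two `t`-column blocks turns `genB` into `diag(GB1, GB2)`, which has
full row rank, and `genE` into `diag(M1, M2)`. Hence this restriction is injective on `B` and
maps `B ∩ E` injectively into `R(M1) × R(M2)`, so `dim(B ∩ E) ≤ rank M1 + rank M2 ≤ c1 + c2`.
Since `G1` and `G2` have full row rank, so does `genE`, and `y ↦ y · genE` identifies `E ∩ S1`
with the coefficient vectors vanishing on the first `a1` rows (the `G1`-columns force this),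
a space of dimension `a2`; symmetrically `dim(E ∩ S2) = a1`.
-/

namespace Matrix

variable {R : Type*} [Semiring R] {m₁ m₂ n₁ n₂ : Type*} [Fintype m₁] [Fintype m₂]

theorem vecMul_fromCols_injective_of_right {A : Matrix m₁ n₁ R} {B : Matrix m₁ n₂ R}
    (hB : Function.Injective B.vecMul) : Function.Injective (fromCols A B).vecMul :=
  fun x y hxy => hB (by simpa using congrArg (· ∘ Sum.inr) hxy)

theorem vecMul_fromBlocks_zero_zero (A : Matrix m₁ n₁ R) (D : Matrix m₂ n₂ R)
    (x : m₁ ⊕ m₂ → R) :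
    x ᵥ* fromBlocks A 0 0 D = Sum.elim ((x ∘ Sum.inl) ᵥ* A) ((x ∘ Sum.inr) ᵥ* D) := by
  simp [vecMul_fromBlocks]

theorem vecMul_fromBlocks_zero_zero_injective {A : Matrix m₁ n₁ R} {D : Matrix m₂ n₂ R}
    (hA : Function.Injective A.vecMul) (hD : Function.Injective D.vecMul) :
    Function.Injective (fromBlocks A 0 0 D).vecMul := by
  intro x y (hxy : x ᵥ* _ = y ᵥ* _)
  rw [vecMul_fromBlocks_zero_zero, vecMul_fromBlocks_zero_zero] at hxy
  rw [← Sum.elim_comp_inl_inr x, ← Sum.elim_comp_inl_inr y,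
    hA (congrArg (· ∘ Sum.inl) hxy), hD (congrArg (· ∘ Sum.inr) hxy)]

end Matrix

section

variable {F : Type*} [Field F]

theorem Matrix.vecMul_injective_of_rank_eq_card {m n : Type*} [Fintype m] [Fintype n]
    {A : Matrix m n F} (h : A.rank = Fintype.card m) : Function.Injective A.vecMul := by
  rw [vecMul_injective_iff, linearIndependent_iff_card_eq_finrank_span, Set.finrank,
    ← rank_eq_finrank_span_row, h]

theorem finrank_rowSpace {m n : Type*} [Fintype m] [Fintype n] (A : Matrix m n F) :
    Module.finrank F (rowSpace A) = A.rank := by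
  rw [rowSpace, range_vecMulLinear, rank_eq_finrank_span_row]

theorem finrank_rowSpace_inf_eq_finrank_comap {m n : Type*} [Fintype m] {A : Matrix m n F}
    (hA : Function.Injective A.vecMul) (W : Submodule F (n → F)) :
    Module.finrank F ↥(rowSpace A ⊓ W) = Module.finrank F (W.comap A.vecMulLinear) := by
  rw [rowSpace, ← Submodule.map_comap_eq]
  exact (Submodule.equivMapOfInjective _ hA _).finrank_eq.symm

theorem finrank_ker_funLeft_add_card {α γ : Type*} [Fintype α] [Fintype γ] {f : α → γ}
    (hf : Function.Injective f) :
    Module.finrank F (LinearMap.ker (LinearMap.funLeft F F f)) + Fintype.card α =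
      Fintype.card γ := by
  have h := (LinearMap.funLeft F F f).finrank_range_add_finrank_ker
  rw [LinearMap.range_eq_top.2 (LinearMap.funLeft_surjective_of_injective F F f hf),
    finrank_top, Module.finrank_fintype_fun_eq_card, Module.finrank_fintype_fun_eq_card] at h
  omega

theorem finrank_inf_le_add_of_jointly_injOn {V X Y : Type*} [AddCommGroup V] [Module F V]
    [AddCommGroup X] [Module F X] [AddCommGroup Y] [Module F Y]
    {U W : Submodule F V} {P : Submodule F X} {Q : Submodule F Y}
    [FiniteDimensional F P] [FiniteDimensional F Q] (f : V →ₗ[F] X) (g : V →ₗ[F] Y)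
    (hfg : ∀ v ∈ U, f v = 0 → g v = 0 → v = 0) (hf : ∀ v ∈ W, f v ∈ P)
    (hg : ∀ v ∈ W, g v ∈ Q) :
    Module.finrank F ↥(U ⊓ W) ≤ Module.finrank F P + Module.finrank F Q := by
  let φ : ↥(U ⊓ W) →ₗ[F] P × Q :=
    (f.restrict (p := U ⊓ W) fun v hv => hf v hv.2).prod
      (g.restrict (p := U ⊓ W) fun v hv => hg v hv.2)
  have hφ : Function.Injective φ := by
    rw [← LinearMap.ker_eq_bot, LinearMap.ker_eq_bot']
    rintro ⟨v, hvU, _⟩ hv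
    exact Subtype.ext (hfg v hvU (congrArg (fun z : P × Q => (z.1 : X)) hv)
      (congrArg (fun z : P × Q => (z.2 : Y)) hv))
  simpa only [Module.finrank_prod] using LinearMap.finrank_le_finrank_of_injective hφ

section Blocks

variable {m₁ m₂ n₁ n₂ : Type*} [Fintype m₁] [Fintype m₂]

theorem comap_vecMulLinear_fromBlocks_ker_funLeft_inl {A : Matrix m₁ n₁ F}
    (D : Matrix m₂ n₂ F) (hA : Function.Injective A.vecMul) :
    (LinearMap.ker (LinearMap.funLeft F F (Sum.inl : n₁ → n₁ ⊕ n₂))).comap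
        (fromBlocks A 0 0 D).vecMulLinear =
      LinearMap.ker (LinearMap.funLeft F F (Sum.inl : m₁ → m₁ ⊕ m₂)) := by
  ext y
  change (y ᵥ* fromBlocks A 0 0 D) ∘ Sum.inl = 0 ↔ y ∘ Sum.inl = 0
  rw [vecMul_fromBlocks_zero_zero, Sum.elim_comp_inl]
  exact hA.eq_iff' (zero_vecMul A)

theorem comap_vecMulLinear_fromBlocks_ker_funLeft_inr (A : Matrix m₁ n₁ F)
    {D : Matrix m₂ n₂ F} (hD : Function.Injective D.vecMul) :
    (LinearMap.ker (LinearMap.funLeft F F (Sum.inr : n₂ → n₁ ⊕ n₂))).comap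
        (fromBlocks A 0 0 D).vecMulLinear =
      LinearMap.ker (LinearMap.funLeft F F (Sum.inr : m₂ → m₁ ⊕ m₂)) := by
  ext y
  change (y ᵥ* fromBlocks A 0 0 D) ∘ Sum.inr = 0 ↔ y ∘ Sum.inr = 0
  rw [vecMul_fromBlocks_zero_zero, Sum.elim_comp_inr]
  exact hD.eq_iff' (zero_vecMul D)

variable {A : Matrix m₁ n₁ F} {D : Matrix m₂ n₂ F}

theorem finrank_rowSpace_fromBlocks_inf_ker_funLeft_inl (hA : Function.Injective A.vecMul)
    (hD : Function.Injective D.vecMul) :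
    Module.finrank F ↥(rowSpace (fromBlocks A 0 0 D) ⊓
      LinearMap.ker (LinearMap.funLeft F F (Sum.inl : n₁ → n₁ ⊕ n₂))) = Fintype.card m₂ := by
  rw [finrank_rowSpace_inf_eq_finrank_comap (vecMul_fromBlocks_zero_zero_injective hA hD),
    comap_vecMulLinear_fromBlocks_ker_funLeft_inl D hA]
  have h := finrank_ker_funLeft_add_card (F := F) (Sum.inl_injective (α := m₁) (β := m₂))
  rw [Fintype.card_sum] at h
  omega

theorem finrank_rowSpace_fromBlocks_inf_ker_funLeft_inr (hA : Function.Injective A.vecMul)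
    (hD : Function.Injective D.vecMul) :
    Module.finrank F ↥(rowSpace (fromBlocks A 0 0 D) ⊓
      LinearMap.ker (LinearMap.funLeft F F (Sum.inr : n₂ → n₁ ⊕ n₂))) = Fintype.card m₁ := by
  rw [finrank_rowSpace_inf_eq_finrank_comap (vecMul_fromBlocks_zero_zero_injective hA hD),
    comap_vecMulLinear_fromBlocks_ker_funLeft_inr A hD]
  have h := finrank_ker_funLeft_add_card (F := F) (Sum.inr_injective (α := m₁) (β := m₂))
  rw [Fintype.card_sum] at h
  omega

end Blocks

section GeneratorMatrices

variable {a1 a2 t1 t2 p1 p2 : ℕ}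

theorem finrank_rowSpace_genB_inf_rowSpace_genE_le
    {GB1 : Matrix (Fin a1) (Fin t1) F} (M11 : Matrix (Fin a1) (Fin p1) F)
    (M12 : Matrix (Fin a1) (Fin p2) F) (M21 : Matrix (Fin a2) (Fin p1) F)
    {GB2 : Matrix (Fin a2) (Fin t2) F} (M22 : Matrix (Fin a2) (Fin p2) F)
    (M1 : Matrix (Fin a1) (Fin t1) F) (G1 : Matrix (Fin a1) (Fin p1) F)
    (M2 : Matrix (Fin a2) (Fin t2) F) (G2 : Matrix (Fin a2) (Fin p2) F)
    (hGB1 : Function.Injective GB1.vecMul) (hGB2 : Function.Injective GB2.vecMul) :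
    Module.finrank F ↥(rowSpace (genB GB1 M11 M12 M21 GB2 M22) ⊓ rowSpace (genE M1 G1 M2 G2)) ≤
      M1.rank + M2.rank := by
  rw [← finrank_rowSpace M1, ← finrank_rowSpace M2]
  refine finrank_inf_le_add_of_jointly_injOn
    (LinearMap.funLeft F F (Sum.inl ∘ Sum.inl)) (LinearMap.funLeft F F (Sum.inr ∘ Sum.inl))
    ?_ ?_ ?_
  · rintro _ ⟨y, rfl⟩ h1 h2
    have hy1 : y ∘ Sum.inl = 0 := hGB1 <| by
      ext j
      simpa [genB, vecMul_fromBlocks] using congrFun h1 j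
    have hy2 : y ∘ Sum.inr = 0 := hGB2 <| by
      ext j
      simpa [genB, vecMul_fromBlocks] using congrFun h2 j
    rw [← Sum.elim_comp_inl_inr y, hy1, hy2, Sum.elim_zero_zero, map_zero]
  · rintro _ ⟨y, rfl⟩
    exact ⟨y ∘ Sum.inl, by ext; simp [genE, vecMul_fromBlocks_zero_zero]⟩
  · rintro _ ⟨y, rfl⟩
    exact ⟨y ∘ Sum.inr, by ext; simp [genE, vecMul_fromBlocks_zero_zero]⟩

end GeneratorMatrices

end

theorem blocks_vs_parallel_blocks_distance_general
    (F : Type*) [Field F] (d n1 n2 a1 a2 t1 t2 c1 c2 k : ℕ)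
    (hd2 : 2 ∣ d) (hk : a1 + a2 = k)
    (ha1 : d / 2 ≤ a1)
    (hc : c1 + c2 ≤ k - d / 2)
    (GB1 : Matrix (Fin a1) (Fin t1) F) (M11 : Matrix (Fin a1) (Fin (n1 - t1)) F)
    (M12 : Matrix (Fin a1) (Fin (n2 - t2)) F) (M21 : Matrix (Fin a2) (Fin (n1 - t1)) F)
    (GB2 : Matrix (Fin a2) (Fin t2) F) (M22 : Matrix (Fin a2) (Fin (n2 - t2)) F)
    (hGB1 : GB1.rank = a1) (hGB2 : GB2.rank = a2)
    (M1 : Matrix (Fin a1) (Fin t1) F) (G1 : Matrix (Fin a1) (Fin (n1 - t1)) F)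
    (M2 : Matrix (Fin a2) (Fin t2) F) (G2 : Matrix (Fin a2) (Fin (n2 - t2)) F)
    (hG1 : G1.rank = a1) (hG2 : G2.rank = a2)
    (hM1 : M1.rank ≤ c1) (hM2 : M2.rank ≤ c2) :
    let B := rowSpace (genB GB1 M11 M12 M21 GB2 M22)
    let E := rowSpace (genE M1 G1 M2 G2)
    (Module.finrank F ↥(B ⊓ E) ≤ c1 + c2) ∧
    (Module.finrank F ↥(B ⊓ E) ≤ k - d / 2) ∧
    (d ≤ 2 * k - 2 * Module.finrank F ↥(B ⊓ E)) ∧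
    (Module.finrank F ↥(E ⊓ S1 F t1 (n1 - t1) t2 (n2 - t2)) = a2) ∧
    (Module.finrank F ↥(E ⊓ S2 F t1 (n1 - t1) t2 (n2 - t2)) = a1) := by
  intro B E
  have full_rank {a n : ℕ} {A : Matrix (Fin a) (Fin n) F} (h : A.rank = a) :
      Function.Injective A.vecMul :=
    vecMul_injective_of_rank_eq_card (h.trans (Fintype.card_fin a).symm)
  have hBE : Module.finrank F ↥(B ⊓ E) ≤ c1 + c2 :=
    (finrank_rowSpace_genB_inf_rowSpace_genE_le M11 M12 M21 M22 M1 G1 M2 G2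
      (full_rank hGB1) (full_rank hGB2)).trans (add_le_add hM1 hM2)
  have hE1 := vecMul_fromCols_injective_of_right (A := M1) (full_rank hG1)
  have hE2 := vecMul_fromCols_injective_of_right (A := M2) (full_rank hG2)
  refine ⟨hBE, hBE.trans hc, by omega, ?_, ?_⟩
  · exact (finrank_rowSpace_fromBlocks_inf_ker_funLeft_inl hE1 hE2).trans (Fintype.card_fin a2)
  · exact (finrank_rowSpace_fromBlocks_inf_ker_funLeft_inr hE1 hE2).trans (Fintype.card_fin a1)

/-- a multi-blocks codeword `B` and a parallel-blocks codeword `E` with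
rank-restricted blocks satisfy `dim(B ∩ E) ≤ c1 + c2 ≤ k - d/2`, hence `dis(B,E) ≥ d`;
moreover `dim(E ∩ S1) = a2 ≥ d/2` and `dim(E ∩ S2) = a1 ≥ d/2`. -/
theorem blocks_vs_parallel_blocks_distance
    (F : Type*) [Field F] [Fintype F] (d n1 n2 a1 a2 t1 t2 c1 c2 k : ℕ)
    (hd : 0 < d) (hd2 : 2 ∣ d)
    (hn1 : n1 = t1 + (n1 - t1)) (hn2 : n2 = t2 + (n2 - t2)) (hk : a1 + a2 = k)
    (ha1 : d / 2 ≤ a1) (ha2 : d / 2 ≤ a2)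
    (ht1 : a1 ≤ t1) (ht1' : t1 ≤ n1 - a1) (ht2 : a2 ≤ t2) (ht2' : t2 ≤ n2 - a2)
    (hc : c1 + c2 ≤ k - d / 2)
    (GB1 : Matrix (Fin a1) (Fin t1) F) (M11 : Matrix (Fin a1) (Fin (n1 - t1)) F)
    (M12 : Matrix (Fin a1) (Fin (n2 - t2)) F) (M21 : Matrix (Fin a2) (Fin (n1 - t1)) F)
    (GB2 : Matrix (Fin a2) (Fin t2) F) (M22 : Matrix (Fin a2) (Fin (n2 - t2)) F)
    (hGB1 : GB1.rank = a1) (hGB2 : GB2.rank = a2)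
    (M1 : Matrix (Fin a1) (Fin t1) F) (G1 : Matrix (Fin a1) (Fin (n1 - t1)) F)
    (M2 : Matrix (Fin a2) (Fin t2) F) (G2 : Matrix (Fin a2) (Fin (n2 - t2)) F)
    (hG1 : G1.rank = a1) (hG2 : G2.rank = a2)
    (hM1 : M1.rank ≤ c1) (hM2 : M2.rank ≤ c2) :
    let B := rowSpace (genB GB1 M11 M12 M21 GB2 M22)
    let E := rowSpace (genE M1 G1 M2 G2)
    (Module.finrank F ↥(B ⊓ E) ≤ c1 + c2) ∧
    (Module.finrank F ↥(B ⊓ E) ≤ k - d / 2) ∧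
    (d ≤ 2 * k - 2 * Module.finrank F ↥(B ⊓ E)) ∧
    (Module.finrank F ↥(E ⊓ S1 F t1 (n1 - t1) t2 (n2 - t2)) = a2) ∧
    (Module.finrank F ↥(E ⊓ S2 F t1 (n1 - t1) t2 (n2 - t2)) = a1) :=
  blocks_vs_parallel_blocks_distance_general F d n1 n2 a1 a2 t1 t2 c1 c2 k hd2 hk ha1 hc GB1 M11 M12
    M21 GB2 M22 hGB1 hGB2 M1 G1 M2 G2 hG1 hG2 hM1 hM2
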